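/- Let A ∈ ℍ^{m×n} be a quaternion matrix with rank(A) = ν, let S₁ ∈ ℍ^{n×p} and T₁ ∈ ℍ^{q×m}, let Y ∈ ℍ^{p×q} be a {1}-inverse of T₁AS₁, and set X = S₁YT₁. Then X satisfies the four conditions AXA = A, XAX = X, R_r(X) = R_r(S₁), and N_r(X) = N_r(T₁) if and only if rank(T₁AS₁) = rank(S₁) = rank(T₁) = ν; moreover, when these rank equalities hold, X is the unique quaternion matrix in ℍ^{n×m} satisfying these four conditions. -/

import Mathlib

/-!
Over a division ring, an inclusion of row spaces `rowsp M ≤ rowsp N` gives `M = C * N`, and an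
inclusion of left kernels `lker N ≤ lker M` gives `M = N * C`. A rank equality
`rank (M * N) = rank N` (resp. `= rank M`) upgrades the automatic inclusion of row spaces
(resp. left kernels) to an equality. With `B = T₁ A S₁`, the rank conditions thus give
`S₁ = C B`, `T₁ = B E` and `A = D T₁ A`, so that `X A S₁ = S₁` and `T₁ A X = T₁`, from which the
four conditions follow. Conversely, range and null space of `X` determine factorisations of `S₁`
and `T₁` through `X`, so all ranks are squeezed between `rank X = rank A` and `rank B`; the right
null space becomes a left kernel after conjugate transposition. Two `{1,2}`-inverses `X`, `Z`
with the same range and null space agree, since `Z = X A Z = X`.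
-/

open Matrix

noncomputable section

/-- The real quaternion division ring ℍ. -/
abbrev Quat : Type := Quaternion ℝ

/-- Left range `R_l(A) = {xA : x ∈ ℍ^{1×m}} ⊆ ℍ^{1×n}`. -/
def leftRange {m n : ℕ} (A : Matrix (Fin m) (Fin n) Quat) : Set (Fin n → Quat) :=
  {y | ∃ x : Fin m → Quat, y = Matrix.vecMul x A}

/-- Left null space `N_l(A) = {x ∈ ℍ^{1×m} : xA = 0}`. -/
def leftNull {m n : ℕ} (A : Matrix (Fin m) (Fin n) Quat) : Set (Fin m → Quat) :=
  {x | Matrix.vecMul x A = 0}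

/-- Right range `R_r(A) = {Ax : x ∈ ℍ^{n×1}} ⊆ ℍ^{m×1}`. -/
def rightRange {m n : ℕ} (A : Matrix (Fin m) (Fin n) Quat) : Set (Fin m → Quat) :=
  {y | ∃ x : Fin n → Quat, y = Matrix.mulVec A x}

/-- Right null space `N_r(A) = {x ∈ ℍ^{n×1} : Ax = 0}`. -/
def rightNull {m n : ℕ} (A : Matrix (Fin m) (Fin n) Quat) : Set (Fin n → Quat) :=
  {x | Matrix.mulVec A x = 0}

/-- The rank of a quaternion matrix: the dimension of its left range
(the left ℍ-span of its rows) as a left ℍ-vector space. -/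
def qRank {m n : ℕ} (A : Matrix (Fin m) (Fin n) Quat) : ℕ :=
  Module.finrank Quat (Submodule.span Quat (Set.range (fun i : Fin m => A i)))

theorem LinearMap.exists_comp_eq_of_ker_le {K V W U : Type*} [DivisionRing K]
    [AddCommGroup V] [Module K V] [AddCommGroup W] [Module K W] [AddCommGroup U] [Module K U]
    (f : V →ₗ[K] W) (g : V →ₗ[K] U) (h : LinearMap.ker f ≤ LinearMap.ker g) :
    ∃ e : W →ₗ[K] U, e ∘ₗ f = g := by
  obtain ⟨e, he⟩ := LinearMap.exists_extend ((LinearMap.ker f).liftQ g h ∘ₗ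
    f.quotKerEquivRange.symm.toLinearMap)
  refine ⟨e, LinearMap.ext fun v => ?_⟩
  have hv : f.quotKerEquivRange.symm (f.rangeRestrict v) = Submodule.Quotient.mk v :=
    f.quotKerEquivRange.symm_apply_eq.mpr (Subtype.ext (f.quotKerEquivRange_apply_mk v).symm)
  simpa [hv] using LinearMap.congr_fun he (f.rangeRestrict v)

namespace Matrix

section Semiring

variable {R : Type*} [Semiring R] {k l m n : Type*} [Fintype l] [Fintype m]

theorem mul_mul_eq_self_of_eq_mul {B : Matrix l m R} {Y : Matrix m l R}
    {C : Matrix k l R} {S : Matrix k m R} (hY : B * Y * B = B) (hS : S = C * B) :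
    S * Y * B = S := by
  rw [hS, Matrix.mul_assoc C, Matrix.mul_assoc C, hY]

theorem mul_mul_eq_self_of_eq_mul' {B : Matrix l m R} {Y : Matrix m l R}
    {E : Matrix m n R} {T : Matrix l n R} (hY : B * Y * B = B) (hT : T = B * E) :
    B * Y * T = T := by
  rw [hT, ← Matrix.mul_assoc, hY]

end Semiring

section DivisionRing

variable {K : Type*} [DivisionRing K] {l m n : Type*} [Fintype l] [Fintype m]

theorem range_vecMulLinear_mul_le (M : Matrix l m K) (N : Matrix m n K) :
    LinearMap.range (M * N).vecMulLinear ≤ LinearMap.range N.vecMulLinear := by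
  rintro _ ⟨x, rfl⟩
  exact ⟨x ᵥ* M, vecMul_vecMul x M N⟩

theorem ker_vecMulLinear_le_mul (M : Matrix l m K) (N : Matrix m n K) :
    LinearMap.ker M.vecMulLinear ≤ LinearMap.ker (M * N).vecMulLinear := by
  intro x hx
  simp_all [← vecMul_vecMul]

theorem exists_eq_mul_of_range_vecMulLinear_le {M : Matrix l n K} {N : Matrix m n K}
    (h : LinearMap.range M.vecMulLinear ≤ LinearMap.range N.vecMulLinear) :
    ∃ C : Matrix l m K, M = C * N := by
  classical
  choose x hx using fun i => h ⟨Pi.single i 1, single_one_vecMul i M⟩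
  exact ⟨of x, ext fun i j => congrFun (hx i).symm j⟩

theorem exists_eq_mul_of_ker_vecMulLinear_le {M : Matrix l n K} {N : Matrix l m K}
    (h : LinearMap.ker N.vecMulLinear ≤ LinearMap.ker M.vecMulLinear) :
    ∃ C : Matrix m n K, M = N * C := by
  classical
  obtain ⟨e, he⟩ := LinearMap.exists_comp_eq_of_ker_le _ _ h
  refine ⟨LinearMap.toMatrixRight' e, toLinearMapRight'.injective ?_⟩
  rw [toLinearMapRight'_mul, LinearEquiv.symm_apply_apply]
  exact he.symm

end DivisionRing

end Matrix

section Quaternion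

variable {a b c : ℕ}

theorem qRank_eq_finrank_range_vecMulLinear (M : Matrix (Fin a) (Fin b) Quat) :
    qRank M = Module.finrank Quat (LinearMap.range M.vecMulLinear) := by
  rw [range_vecMulLinear]
  rfl

theorem qRank_mul_le_right (M : Matrix (Fin a) (Fin b) Quat) (N : Matrix (Fin b) (Fin c) Quat) :
    qRank (M * N) ≤ qRank N := by
  simp only [qRank_eq_finrank_range_vecMulLinear]
  exact Submodule.finrank_mono (range_vecMulLinear_mul_le M N)

theorem qRank_mul_le_left (M : Matrix (Fin a) (Fin b) Quat) (N : Matrix (Fin b) (Fin c) Quat) :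
    qRank (M * N) ≤ qRank M := by
  have hker := Submodule.finrank_mono (ker_vecMulLinear_le_mul M N)
  have hM := LinearMap.finrank_range_add_finrank_ker M.vecMulLinear
  have hMN := LinearMap.finrank_range_add_finrank_ker (M * N).vecMulLinear
  simp only [qRank_eq_finrank_range_vecMulLinear]
  omega

theorem qRank_le_of_mul_mul_eq {A : Matrix (Fin a) (Fin b) Quat} {X : Matrix (Fin b) (Fin a) Quat}
    (h : A * X * A = A) : qRank A ≤ qRank X :=
  calc qRank A = qRank (A * X * A) := by rw [h]
    _ ≤ qRank (A * X) := qRank_mul_le_left _ _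
    _ ≤ qRank X := qRank_mul_le_right _ _

theorem exists_eq_mul_mul_of_qRank_mul_eq_right {M : Matrix (Fin a) (Fin b) Quat}
    {N : Matrix (Fin b) (Fin c) Quat} (h : qRank (M * N) = qRank N) :
    ∃ C : Matrix (Fin b) (Fin a) Quat, N = C * (M * N) := by
  refine exists_eq_mul_of_range_vecMulLinear_le
    (Submodule.eq_of_le_of_finrank_le (range_vecMulLinear_mul_le M N) ?_).ge
  simp only [← qRank_eq_finrank_range_vecMulLinear, h, le_refl]

theorem exists_eq_mul_mul_of_qRank_mul_eq_left {M : Matrix (Fin a) (Fin b) Quat}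
    {N : Matrix (Fin b) (Fin c) Quat} (h : qRank (M * N) = qRank M) :
    ∃ C : Matrix (Fin c) (Fin b) Quat, M = M * N * C := by
  refine exists_eq_mul_of_ker_vecMulLinear_le
    (Submodule.eq_of_le_of_finrank_le (ker_vecMulLinear_le_mul M N) ?_).ge
  have hM := LinearMap.finrank_range_add_finrank_ker M.vecMulLinear
  have hMN := LinearMap.finrank_range_add_finrank_ker (M * N).vecMulLinear
  simp only [← qRank_eq_finrank_range_vecMulLinear] at hM hMN
  omega

theorem rightRange_mul_subset (M : Matrix (Fin a) (Fin b) Quat) (N : Matrix (Fin b) (Fin c) Quat) :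
    rightRange (M * N) ⊆ rightRange M := by
  rintro _ ⟨x, rfl⟩
  exact ⟨N *ᵥ x, (mulVec_mulVec x M N).symm⟩

theorem rightNull_subset_mul (M : Matrix (Fin a) (Fin b) Quat) (N : Matrix (Fin b) (Fin c) Quat) :
    rightNull N ⊆ rightNull (M * N) := by
  intro x hx
  simp_all [rightNull, ← mulVec_mulVec]

theorem exists_eq_mul_of_rightRange_subset {M : Matrix (Fin a) (Fin b) Quat}
    {N : Matrix (Fin a) (Fin c) Quat} (h : rightRange M ⊆ rightRange N) :
    ∃ C : Matrix (Fin c) (Fin b) Quat, M = N * C := by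
  choose x hx using fun j => h ⟨Pi.single j 1, rfl⟩
  refine ⟨(Matrix.of x)ᵀ, Matrix.ext fun i j => ?_⟩
  have hij := congrFun (hx j) i
  rw [mulVec_single_one] at hij
  exact hij

theorem exists_eq_mul_of_rightNull_subset {M : Matrix (Fin a) (Fin b) Quat}
    {N : Matrix (Fin c) (Fin b) Quat} (h : rightNull N ⊆ rightNull M) :
    ∃ C : Matrix (Fin a) (Fin c) Quat, M = C * N := by
  have vecMul_conjTranspose {k : ℕ} (P : Matrix (Fin k) (Fin b) Quat) (x : Fin b → Quat) :
      x ᵥ* Pᴴ = star (P *ᵥ star x) := by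
    rw [star_mulVec, star_star]
  have hker : LinearMap.ker Nᴴ.vecMulLinear ≤ LinearMap.ker Mᴴ.vecMulLinear := by
    intro x hx
    have hx' : star x ∈ rightNull N := by
      simpa [rightNull, vecMul_conjTranspose] using hx
    simpa [rightNull, vecMul_conjTranspose] using h hx'
  obtain ⟨C, hC⟩ := exists_eq_mul_of_ker_vecMulLinear_le hker
  exact ⟨Cᴴ, by simpa using congrArg Matrix.conjTranspose hC⟩

theorem qRank_le_of_rightRange_subset {M : Matrix (Fin a) (Fin b) Quat}
    {N : Matrix (Fin a) (Fin c) Quat} (h : rightRange M ⊆ rightRange N) : qRank M ≤ qRank N := by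
  obtain ⟨C, rfl⟩ := exists_eq_mul_of_rightRange_subset h
  exact qRank_mul_le_left N C

theorem qRank_le_of_rightNull_subset {M : Matrix (Fin a) (Fin b) Quat}
    {N : Matrix (Fin c) (Fin b) Quat} (h : rightNull N ⊆ rightNull M) : qRank M ≤ qRank N := by
  obtain ⟨C, rfl⟩ := exists_eq_mul_of_rightNull_subset h
  exact qRank_mul_le_right C N

end Quaternion

section ReflexiveInverse

variable {m n p q : ℕ}

/-- `X = A^{(1,2)}_{R_r(S), N_r(T)}` in the paper's notation. -/
def IsReflexiveInverseWithRangeNull (A : Matrix (Fin m) (Fin n) Quat)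
    (S : Matrix (Fin n) (Fin p) Quat) (T : Matrix (Fin q) (Fin m) Quat)
    (X : Matrix (Fin n) (Fin m) Quat) : Prop :=
  A * X * A = A ∧ X * A * X = X ∧ rightRange X = rightRange S ∧ rightNull X = rightNull T

variable {A : Matrix (Fin m) (Fin n) Quat} {S : Matrix (Fin n) (Fin p) Quat}
  {T : Matrix (Fin q) (Fin m) Quat}

theorem eq_of_rightRange_subset_of_rightNull_subset {X Z : Matrix (Fin n) (Fin m) Quat}
    (hX : X * A * X = X) (hZ : Z * A * Z = Z) (hRange : rightRange Z ⊆ rightRange X)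
    (hNull : rightNull Z ⊆ rightNull X) : Z = X := by
  obtain ⟨V, hV⟩ := exists_eq_mul_of_rightRange_subset hRange
  obtain ⟨C, hC⟩ := exists_eq_mul_of_rightNull_subset hNull
  calc Z = X * A * X * V := by rw [hX, hV]
    _ = C * (Z * A * Z) := by rw [Matrix.mul_assoc _ X V, ← hV, hC]; simp only [Matrix.mul_assoc]
    _ = X := by rw [hZ, hC]

theorem IsReflexiveInverseWithRangeNull.qRank_mul_mul_eq {Y : Matrix (Fin p) (Fin q) Quat}
    (h : IsReflexiveInverseWithRangeNull A S T (S * Y * T)) :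
    qRank (T * A * S) = qRank S ∧ qRank (T * A * S) = qRank T ∧
      qRank (T * A * S) = qRank A := by
  obtain ⟨hAXA, hXAX, hRange, hNull⟩ := h
  have hXA : qRank (S * Y * T) = qRank A :=
    le_antisymm (qRank_le_of_mul_mul_eq hXAX) (qRank_le_of_mul_mul_eq hAXA)
  have hXB : qRank (S * Y * T) ≤ qRank (T * A * S) :=
    calc qRank (S * Y * T) = qRank (S * Y * (T * A * S) * Y * T) := by
          rw [← hXAX]; simp only [Matrix.mul_assoc]
      _ ≤ qRank (S * Y * (T * A * S)) :=
          (qRank_mul_le_left _ _).trans (qRank_mul_le_left _ _)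
      _ ≤ qRank (T * A * S) := qRank_mul_le_right _ _
  have hBA : qRank (T * A * S) ≤ qRank A :=
    (qRank_mul_le_left _ _).trans (qRank_mul_le_right _ _)
  have hXS : qRank (S * Y * T) ≤ qRank S :=
    (qRank_mul_le_left _ _).trans (qRank_mul_le_left _ _)
  have hXT : qRank (S * Y * T) ≤ qRank T := qRank_mul_le_right _ _
  have hSX := qRank_le_of_rightRange_subset hRange.ge
  have hTX := qRank_le_of_rightNull_subset hNull.le
  omega

theorem isReflexiveInverseWithRangeNull_mul_mul {Y : Matrix (Fin p) (Fin q) Quat}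
    (hY : T * A * S * Y * (T * A * S) = T * A * S)
    (hS : qRank (T * A * S) = qRank S) (hT : qRank (T * A * S) = qRank T)
    (hA : qRank (T * A * S) = qRank A) :
    IsReflexiveInverseWithRangeNull A S T (S * Y * T) := by
  obtain ⟨C, hC⟩ := exists_eq_mul_mul_of_qRank_mul_eq_right hS
  obtain ⟨E, hE⟩ := exists_eq_mul_mul_of_qRank_mul_eq_left (M := T) (N := A * S)
    (by rwa [← Matrix.mul_assoc])
  rw [← Matrix.mul_assoc] at hE
  have hTA : qRank (T * A) = qRank A :=
    le_antisymm (qRank_mul_le_right T A) (hA ▸ qRank_mul_le_left (T * A) S)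
  obtain ⟨D, hD⟩ := exists_eq_mul_mul_of_qRank_mul_eq_right hTA
  have hXAS : S * Y * T * A * S = S := by
    simpa only [Matrix.mul_assoc] using mul_mul_eq_self_of_eq_mul hY hC
  have hTAX : T * A * (S * Y * T) = T := by
    simpa only [Matrix.mul_assoc] using mul_mul_eq_self_of_eq_mul' hY hE
  refine ⟨?_, ?_, ?_, ?_⟩
  · calc A * (S * Y * T) * A = D * (T * A * (S * Y * T)) * A := by
          nth_rw 1 [hD]; simp only [Matrix.mul_assoc]
      _ = A := by rw [hTAX, Matrix.mul_assoc, ← hD]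
  · calc S * Y * T * A * (S * Y * T) = S * Y * T * A * S * (Y * T) := by
          simp only [Matrix.mul_assoc]
      _ = S * Y * T := by rw [hXAS, Matrix.mul_assoc]
  · apply Set.Subset.antisymm
    · simpa only [Matrix.mul_assoc] using rightRange_mul_subset S (Y * T)
    · simpa only [← Matrix.mul_assoc, hXAS] using rightRange_mul_subset (S * Y * T) (A * S)
  · apply Set.Subset.antisymm
    · simpa only [hTAX] using rightNull_subset_mul (T * A) (S * Y * T)
    · exact rightNull_subset_mul (S * Y) T

end ReflexiveInverse

/-- Theorem 3.4 (e). -/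
theorem stmt10 {m n p q ν : ℕ} (A : Matrix (Fin m) (Fin n) Quat) (hA : qRank A = ν)
    (S₁ : Matrix (Fin n) (Fin p) Quat) (T₁ : Matrix (Fin q) (Fin m) Quat)
    (Y : Matrix (Fin p) (Fin q) Quat)
    (hY : (T₁ * A * S₁) * Y * (T₁ * A * S₁) = T₁ * A * S₁)
    (X : Matrix (Fin n) (Fin m) Quat) (hX : X = S₁ * Y * T₁) :
    ((A * X * A = A ∧ X * A * X = X ∧ rightRange X = rightRange S₁ ∧
        rightNull X = rightNull T₁) ↔
      (qRank (T₁ * A * S₁) = qRank S₁ ∧ qRank (T₁ * A * S₁) = qRank T₁ ∧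
        qRank (T₁ * A * S₁) = ν)) ∧
    (qRank (T₁ * A * S₁) = qRank S₁ → qRank (T₁ * A * S₁) = qRank T₁ →
      qRank (T₁ * A * S₁) = ν →
      ∀ Z : Matrix (Fin n) (Fin m) Quat,
        A * Z * A = A → Z * A * Z = Z → rightRange Z = rightRange S₁ →
          rightNull Z = rightNull T₁ → Z = X) := by
  subst hX hA
  have hsolution (hS : qRank (T₁ * A * S₁) = qRank S₁) (hT : qRank (T₁ * A * S₁) = qRank T₁)
      (hA : qRank (T₁ * A * S₁) = qRank A) :
      IsReflexiveInverseWithRangeNull A S₁ T₁ (S₁ * Y * T₁) :=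
    isReflexiveInverseWithRangeNull_mul_mul hY hS hT hA
  refine ⟨⟨IsReflexiveInverseWithRangeNull.qRank_mul_mul_eq,
    fun ⟨hS, hT, hA⟩ => hsolution hS hT hA⟩, fun hS hT hA Z _ hZAZ hZRange hZNull => ?_⟩
  obtain ⟨-, hXAX, hXRange, hXNull⟩ := hsolution hS hT hA
  exact eq_of_rightRange_subset_of_rightNull_subset hXAX hZAZ
    (hZRange.trans hXRange.symm).subset (hZNull.trans hXNull.symm).subset
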